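/- Row 2 of π° has no false positives on solutions: let a Witness triangle puzzle instance on the m×n grid assign k(s) = 3 triangles to a square s. If L is a solution of the instance and W is a prefix of L whose last vertex is not a corner of s, then cnt(W,s) ≠ 1. -/

import Mathlib

/-!
Let `f` be the only boundary edge of `s` on the prefix `W`. In the 4-cycle of boundary edges,
every edge other than `f` and its opposite edge meets `f` at a corner; since `L` uses three of
the four, it uses such an edge `g`, meeting `f` at a corner `u`. Now `u` lies on `W` but is not
its last vertex, and `L` is a path, so `L` never returns to `u` after `W`: every edge of `L` at
`u`, in particular `g`, already lies on `W`. Thus `W` has two boundary edges of `s`.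
-/

open SimpleGraph

/-- The grid graph on `(m+1) × (n+1)` vertices: two vertices are adjacent iff
the sum of the absolute differences of their coordinates (in `ℤ`) equals `1`. -/
def gridGraph (m n : ℕ) : SimpleGraph (Fin (m+1) × Fin (n+1)) where
  Adj u v := |(u.1 : ℤ) - (v.1 : ℤ)| + |(u.2 : ℤ) - (v.2 : ℤ)| = 1
  symm := by
    constructor
    intro u v h
    try dsimp only at h ⊢
    rw [abs_sub_comm ((u.1 : ℤ)), abs_sub_comm ((u.2 : ℤ))] at h
    exact h
  loopless := by constructor; intro u h; simp at h

/-- The four corners of the square `s(i,j)`. -/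
def squareCorners {m n : ℕ} (i : Fin m) (j : Fin n) :
    Finset (Fin (m+1) × Fin (n+1)) :=
  {(i.castSucc, j.castSucc), (i.succ, j.castSucc),
   (i.castSucc, j.succ), (i.succ, j.succ)}

/-- The four boundary edges of the square `s(i,j)`. -/
def squareEdges {m n : ℕ} (i : Fin m) (j : Fin n) :
    Finset (Sym2 (Fin (m+1) × Fin (n+1))) :=
  { s((i.castSucc, j.castSucc), (i.succ, j.castSucc)),
    s((i.castSucc, j.succ), (i.succ, j.succ)),
    s((i.castSucc, j.castSucc), (i.castSucc, j.succ)),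
    s((i.succ, j.castSucc), (i.succ, j.succ)) }

/-- The number of edges of the walk `W` lying on the boundary of square `s(i,j)`. -/
def cnt {m n : ℕ} {u v : Fin (m+1) × Fin (n+1)}
    (W : (gridGraph m n).Walk u v) (i : Fin m) (j : Fin n) : ℕ :=
  (W.edges.filter (fun e => e ∈ squareEdges i j)).length

open Finset

namespace SimpleGraph.Walk

variable {V : Type*} {G : SimpleGraph V} {u v w x : V}

theorem IsPath.mem_edges_left_of_mem_edges_append {p : G.Walk u v} {q : G.Walk v w}
    (hpq : (p.append q).IsPath) (hx : x ∈ p.support) (hxv : x ≠ v) {e : Sym2 V}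
    (he : e ∈ (p.append q).edges) (hxe : x ∈ e) : e ∈ p.edges := by
  rw [edges_append, List.mem_append] at he
  exact he.resolve_right fun heq =>
    hpq.ne_of_mem_support_of_append hxv hx (mem_support_of_mem_edges heq hxe) rfl

end SimpleGraph.Walk

theorem List.Nodup.length_filter_mem_eq_card {α : Type*} [DecidableEq α] {l : List α}
    (hl : l.Nodup) (s : Finset α) : (l.filter (· ∈ s)).length = #{a ∈ s | a ∈ l} := by
  rw [← List.toFinset_card_of_nodup (hl.filter _)]
  congr 1
  ext a
  simp [and_comm]

section Square

variable {m n : ℕ} (i : Fin m) (j : Fin n)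

theorem cnt_eq_card {u v : Fin (m+1) × Fin (n+1)} {W : (gridGraph m n).Walk u v}
    (hW : W.IsTrail) : cnt W i j = #{e ∈ squareEdges i j | e ∈ W.edges} :=
  hW.edges_nodup.length_filter_mem_eq_card _

variable {i j}

theorem mem_squareCorners_of_mem_squareEdges {e : Sym2 (Fin (m+1) × Fin (n+1))}
    {u : Fin (m+1) × Fin (n+1)} (he : e ∈ squareEdges i j) (hu : u ∈ e) :
    u ∈ squareCorners i j := by
  simp only [squareEdges, mem_insert, mem_singleton] at he
  rcases he with rfl | rfl | rfl | rfl <;> rcases Sym2.mem_iff.1 hu with rfl | rfl <;>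
    simp [squareCorners]

theorem exists_opposite_squareEdge {f : Sym2 (Fin (m+1) × Fin (n+1))}
    (hf : f ∈ squareEdges i j) : ∃ f', ∀ g ∈ squareEdges i j, g ≠ f → g ≠ f' →
      ∃ u ∈ f, u ∈ g := by
  simp only [squareEdges, mem_insert, mem_singleton] at hf ⊢
  rcases hf with rfl | rfl | rfl | rfl
  · exact ⟨s((i.castSucc, j.succ), (i.succ, j.succ)), by
      rintro g (rfl | rfl | rfl | rfl) hgf hgf' <;> simp_all⟩
  · exact ⟨s((i.castSucc, j.castSucc), (i.succ, j.castSucc)), by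
      rintro g (rfl | rfl | rfl | rfl) hgf hgf' <;> simp_all⟩
  · exact ⟨s((i.succ, j.castSucc), (i.succ, j.succ)), by
      rintro g (rfl | rfl | rfl | rfl) hgf hgf' <;> simp_all⟩
  · exact ⟨s((i.castSucc, j.castSucc), (i.castSucc, j.succ)), by
      rintro g (rfl | rfl | rfl | rfl) hgf hgf' <;> simp_all⟩

end Square

theorem row2_no_false_positives_general {m n : ℕ}
    {vStart vGoal v : Fin (m+1) × Fin (n+1)}
    (k : Fin m → Fin n → Option ℕ)
    (L : (gridGraph m n).Walk vStart vGoal) (hL : L.IsPath)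
    (hsol : ∀ i j t, k i j = some t → cnt L i j = t)
    (i : Fin m) (j : Fin n) (h3 : k i j = some 3)
    (W : (gridGraph m n).Walk vStart v)
    (hpre : ∃ X : (gridGraph m n).Walk v vGoal, L = W.append X)
    (hv : v ∉ squareCorners i j) :
    cnt W i j ≠ 1 := by
  obtain ⟨X, rfl⟩ := hpre
  rw [cnt_eq_card i j hL.of_append_left.isTrail, ne_eq, card_eq_one]
  rintro ⟨f, hWf⟩
  have hf : f ∈ squareEdges i j ∧ f ∈ W.edges := by
    simpa using hWf.ge (mem_singleton_self f)
  obtain ⟨f', hf'⟩ := exists_opposite_squareEdge hf.1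
  have hL3 : #{e ∈ squareEdges i j | e ∈ (W.append X).edges} = 3 :=
    cnt_eq_card i j hL.isTrail ▸ hsol i j 3 h3
  obtain ⟨g, hg⟩ : ({e ∈ squareEdges i j | e ∈ (W.append X).edges} \ {f, f'}).Nonempty := by
    rw [← card_pos]
    have := le_card_sdiff {f, f'} {e ∈ squareEdges i j | e ∈ (W.append X).edges}
    have := card_le_two (a := f) (b := f')
    omega
  simp only [mem_sdiff, mem_filter, mem_insert, mem_singleton, not_or] at hg
  obtain ⟨⟨hgS, hgL⟩, hgf, hgf'⟩ := hg
  obtain ⟨u, huf, hug⟩ := hf' g hgS hgf hgf'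
  have huv : u ≠ v := fun h => hv (h ▸ mem_squareCorners_of_mem_squareEdges hf.1 huf)
  have hgW : g ∈ W.edges :=
    hL.mem_edges_left_of_mem_edges_append (W.mem_support_of_mem_edges hf.2 huf) huv hgL hug
  exact hgf (mem_singleton.1 (hWf ▸ mem_filter.2 ⟨hgS, hgW⟩))

/-- Row 2 of the learned predicate has no false positives on solutions: if a
square carries a three-triangle constraint, `L` solves the puzzle, and `W` is a
prefix of `L` ending at a vertex which is not a corner of that square, then `W`
does not contain exactly one boundary edge of the square. -/
theorem row2_no_false_positives {m n : ℕ}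
    {vStart vGoal v : Fin (m+1) × Fin (n+1)}
    (k : Fin m → Fin n → Option ℕ)
    (hk : ∀ i j t, k i j = some t → t = 1 ∨ t = 2 ∨ t = 3)
    (L : (gridGraph m n).Walk vStart vGoal) (hL : L.IsPath)
    (hsol : ∀ i j t, k i j = some t → cnt L i j = t)
    (i : Fin m) (j : Fin n) (h3 : k i j = some 3)
    (W : (gridGraph m n).Walk vStart v)
    (hpre : ∃ X : (gridGraph m n).Walk v vGoal, L = W.append X)
    (hv : v ∉ squareCorners i j) :
    cnt W i j ≠ 1 :=
  row2_no_false_positives_general k L hL hsol i j h3 W hpre hv
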